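/- Let n ≥ 1 be an integer and let a, b, c, d be integers with a·d − n·b·c = 1. Define the 3×3 integer matrix R with rows (a², c²n, 2acn), (b²n, d², 2bdn), (ab, cd, bcn + ad). Then the following congruence conditions hold simultaneously — R₁₂ ≡ R₂₁ ≡ R₃₁ ≡ R₃₂ ≡ 0 (mod 2), R₁₃ ≡ R₂₃ ≡ 0 (mod 2n), R₁₁ ≡ R₂₂ ≡ 1 (mod 2), and R₃₃ ≡ 1 (mod 2n) — if and only if a ≡ d ≡ 1 (mod 2) and b ≡ c ≡ 0 (mod 2). -/
import Mathlib


open Matrix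

namespace Stmt7

/-- The image of the matrix `(a, b; cn, d) ∈ SL₂(ℤ)` under the map
`R_n : SL₂(ℝ) → SO_ℝ(2,1)`. -/
def R (n a b c d : ℤ) : Matrix (Fin 3) (Fin 3) ℤ :=
  !![a ^ 2, c ^ 2 * n, 2 * a * c * n;
     b ^ 2 * n, d ^ 2, 2 * b * d * n;
     a * b, c * d, b * c * n + a * d]

theorem statement7 (n : ℤ) (hn : 1 ≤ n) (a b c d : ℤ)
    (h : a * d - n * b * c = 1) :
    (R n a b c d 0 1 ≡ 0 [ZMOD 2] ∧ R n a b c d 1 0 ≡ 0 [ZMOD 2] ∧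
        R n a b c d 2 0 ≡ 0 [ZMOD 2] ∧ R n a b c d 2 1 ≡ 0 [ZMOD 2] ∧
        R n a b c d 0 2 ≡ 0 [ZMOD 2 * n] ∧ R n a b c d 1 2 ≡ 0 [ZMOD 2 * n] ∧
        R n a b c d 0 0 ≡ 1 [ZMOD 2] ∧ R n a b c d 1 1 ≡ 1 [ZMOD 2] ∧
        R n a b c d 2 2 ≡ 1 [ZMOD 2 * n]) ↔
      (a ≡ 1 [ZMOD 2] ∧ d ≡ 1 [ZMOD 2] ∧ b ≡ 0 [ZMOD 2] ∧ c ≡ 0 [ZMOD 2]) := by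
  simp only [R, Matrix.cons_val', Matrix.cons_val_zero, Matrix.cons_val_one, Matrix.head_cons,
    Matrix.empty_val', Matrix.cons_val_fin_one, Matrix.head_fin_const, Matrix.cons_val_two,
    Matrix.tail_cons, Matrix.of_apply]
  have e5 : 2 * a * c * n ≡ 0 [ZMOD 2 * n] :=
    Int.modEq_zero_iff_dvd.mpr ⟨a * c, by ring⟩
  have e6 : 2 * b * d * n ≡ 0 [ZMOD 2 * n] :=
    Int.modEq_zero_iff_dvd.mpr ⟨b * d, by ring⟩
  have e9 : b * c * n + a * d ≡ 1 [ZMOD 2 * n] :=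
    (Int.modEq_iff_dvd.mpr ⟨b * c, by linear_combination h⟩).symm
  have key : ∀ x : ℤ, x ^ 2 ≡ 1 [ZMOD 2] → x ≡ 1 [ZMOD 2] := by
    intro x hx
    simp only [Int.ModEq, pow_two] at hx ⊢
    rcases Int.emod_two_eq x with hx2 | hx2
    · rw [Int.mul_emod, hx2] at hx; omega
    · omega
  constructor
  · rintro ⟨h1, h2, h3, h4, -, -, h7, h8, -⟩
    have hA := key a h7
    have hD := key d h8
    refine ⟨hA, hD, ?_, ?_⟩
    · simpa using (hA.mul_right b).symm.trans h3
    · simpa using (hD.mul_left c).symm.trans h4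
  · rintro ⟨ha, hd, hb, hc⟩
    refine ⟨by simpa using (hc.pow 2).mul_right n, by simpa using (hb.pow 2).mul_right n,
      by simpa using ha.mul hb, by simpa using hc.mul hd, e5, e6,
      by simpa using ha.pow 2, by simpa using hd.pow 2, e9⟩

end Stmt7
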